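/- Over the rationals, with L = 4 and R_l the 4×4 cyclic rotation matrices, the 12×12 block matrix [[I, I, I],[I, 2R_1, 3R_3],[I, 4R_2, 9R_1]] is invertible. -/

import Mathlib

/-!
All blocks are polynomials in the shift `R = rot4 1`, which satisfies `R ^ 4 = 1`, so the block
matrix is the image of a `3 × 3` matrix over the commutative ring `ℚ[X]/(X⁴ - 1)` under
`X ↦ R`. Over that ring the determinant is `X (3X² + 22X - 23)`, a unit: `X⁻¹ = X³`, and
`3X² + 22X - 23` vanishes at no fourth root of unity, explicitly
`(3X² + 22X - 23)(2627 + 2959X + 3173X² + 3421X³) ≡ 24360 mod X⁴ - 1`.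
-/

/-- Cyclic rotation matrix over ℚ, size 4. -/
def rot4 (l : ℕ) : Matrix (Fin 4) (Fin 4) ℚ :=
  Matrix.of fun i j => if (j : ℕ) = ((i : ℕ) + l) % 4 then 1 else 0

/-- 3×3 block matrix of 4×4 blocks. -/
def blk3 (B : Fin 3 → Fin 3 → Matrix (Fin 4) (Fin 4) ℚ) :
    Matrix (Fin 3 × Fin 4) (Fin 3 × Fin 4) ℚ :=
  Matrix.of fun p q => B p.1 q.1 p.2 q.2

open Polynomial

theorem rot4_add (a b : ℕ) : rot4 (a + b) = rot4 a * rot4 b := by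
  ext i j
  rw [Matrix.mul_apply, Finset.sum_eq_single ⟨(i + a) % 4, Nat.mod_lt _ (by norm_num)⟩]
  · simp [rot4, add_assoc]
  · intro k _ hk
    simp only [rot4, Matrix.of_apply, ite_mul, one_mul, zero_mul]
    rw [if_neg fun h => hk (Fin.ext h)]
  · simp

theorem rot4_zero : rot4 0 = 1 := by
  ext i j
  simp [rot4, Matrix.one_apply, Fin.ext_iff, Nat.mod_eq_of_lt i.2, eq_comm]

theorem rot4_four : rot4 4 = 1 := by
  rw [← rot4_zero]
  ext i j
  simp [rot4]

theorem rot4_one_pow (n : ℕ) : rot4 1 ^ n = rot4 n := by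
  induction n with
  | zero => rw [pow_zero, rot4_zero]
  | succ n ih => rw [pow_succ, ih, rot4_add]

noncomputable def rot4Hom : AdjoinRoot (X ^ 4 - 1 : ℚ[X]) →+* Matrix (Fin 4) (Fin 4) ℚ :=
  Ideal.Quotient.lift _ (aeval (rot4 1)).toRingHom fun p hp => by
    obtain ⟨q, rfl⟩ := Ideal.mem_span_singleton'.1 hp
    simp [rot4_one_pow, rot4_four]

theorem rot4Hom_root : rot4Hom (AdjoinRoot.root _) = rot4 1 :=
  aeval_X _

def rotationCodeMatrix {C : Type*} [CommRing C] (r : C) : Matrix (Fin 3) (Fin 3) C :=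
  !![1, 1, 1; 1, 2 * r, 3 * r ^ 3; 1, 4 * r ^ 2, 9 * r]

theorem det_rotationCodeMatrix {C : Type*} [CommRing C] {r : C} (hr : r ^ 4 = 1) :
    (rotationCodeMatrix r).det = r * (3 * r ^ 2 + 22 * r - 23) := by
  rw [rotationCodeMatrix, Matrix.det_fin_three]
  simp only [Matrix.of_apply, Matrix.cons_val', Matrix.cons_val_zero, Matrix.cons_val_fin_one,
    Matrix.cons_val_one, Matrix.cons_val, one_mul, mul_one]
  linear_combination (-12 * r) * hr

theorem isUnit_rotationCodeMatrix {C : Type*} [CommRing C] [Algebra ℚ C] {r : C}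
    (hr : r ^ 4 = 1) : IsUnit (rotationCodeMatrix r) := by
  have hr_unit : IsUnit r := IsUnit.of_mul_eq_one (r ^ 3) (by rw [← pow_succ']; exact hr)
  have h24360 : IsUnit (24360 : C) := by
    simpa only [map_ofNat] using
      (isUnit_iff_ne_zero.2 (by norm_num : (24360 : ℚ) ≠ 0)).map (algebraMap ℚ C)
  have hquad_unit : IsUnit (3 * r ^ 2 + 22 * r - 23) := by
    refine isUnit_of_mul_isUnit_left (y := 2627 + 2959 * r + 3173 * r ^ 2 + 3421 * r ^ 3) ?_
    convert h24360 using 1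
    linear_combination (84781 + 10263 * r) * hr
  rw [Matrix.isUnit_iff_isUnit_det, det_rotationCodeMatrix hr]
  exact hr_unit.mul hquad_unit

theorem case4_invertible :
    IsUnit (blk3 ![![1, 1, 1], ![1, 2 • rot4 1, 3 • rot4 3], ![1, 4 • rot4 2, 9 • rot4 1]]) := by
  have hr : AdjoinRoot.root (X ^ 4 - 1 : ℚ[X]) ^ 4 = 1 := by
    have := AdjoinRoot.eval₂_root (X ^ 4 - 1 : ℚ[X])
    rwa [eval₂_sub, eval₂_X_pow, eval₂_one, sub_eq_zero] at this
  have hblocks :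
      Matrix.of ![![1, 1, 1], ![1, 2 • rot4 1, 3 • rot4 3], ![1, 4 • rot4 2, 9 • rot4 1]]
        = (rotationCodeMatrix (AdjoinRoot.root _)).map rot4Hom := by
    ext1 i j
    fin_cases i <;> fin_cases j <;>
      simp [rotationCodeMatrix, rot4Hom_root, rot4_one_pow, nsmul_eq_mul, map_ofNat]
  have hunit := ((isUnit_rotationCodeMatrix hr).map rot4Hom.mapMatrix).map
    (Matrix.compRingEquiv (Fin 3) (Fin 4) ℚ)
  rwa [RingHom.mapMatrix_apply, ← hblocks] at hunit
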